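/- arXiv:1312.0838 — 2 statements merged into one kernel-verified Lean document; each statement's English description precedes it below -/
import Mathlib

section
/- Fix i ≠ j in I and an integer r ≥ 0, and define N₁(l) = e_{i,λ+lα_i+α_j}^{r-l} · e_{j,λ+lα_i} · e_{i,λ}^{l} · s_{ii}^{l(l+1)/2 + (r-l)(r-l+1)/2} for 0 ≤ l ≤ r, where e_{i,λ} = ∏_{k∈I} s_{ik}^{λ(k)}. Then N₁(l) = N₂ · s_{ij}^{-l} · s_{ji}^{l} where N₂ = N₁(0) is independent of l; equivalently, N₁(l) · s_{ij}^{l} · s_{ji}^{-l} is constant in l. -/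
/-!
Writing `A = e_{i,λ}`, `B = e_{j,λ}`, the weights shift additively:
`e_{i,λ+lα_i+α_j} = A · s_{ii}^l · s_{ij}` and `e_{j,λ+lα_i} = B · s_{ji}^l`.
With `r = l + m`, `N₁(l)` becomes `(A s_{ij})^m B s_{ji}^l A^l s_{ii}^{lm + T(l) + T(m)}`
(`T` the triangular numbers), and `T(l + m) = T(l) + T(m) + lm` absorbs the cross term.
-/

open Finset

theorem triangle_add (l m : ℕ) :
    (l + m) * (l + m + 1) / 2 = l * (l + 1) / 2 + m * (m + 1) / 2 + l * m := by
  obtain ⟨a, ha⟩ := (Nat.even_mul_succ_self l).two_dvd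
  obtain ⟨b, hb⟩ := (Nat.even_mul_succ_self m).two_dvd
  have hsum : (l + m) * (l + m + 1) = l * (l + 1) + m * (m + 1) + 2 * (l * m) := by ring
  omega

section WeightProduct

variable {I G : Type*} [Fintype I] [CommGroup G]

theorem prod_zpow_add (f : I → G) (μ ν : I → ℤ) :
    ∏ k, f k ^ (μ + ν) k = (∏ k, f k ^ μ k) * ∏ k, f k ^ ν k := by
  simp only [Pi.add_apply, zpow_add, prod_mul_distrib]

variable [DecidableEq I]

theorem prod_zpow_single (f : I → G) (b : I) (c : ℤ) :
    ∏ k, f k ^ (Pi.single b c : I → ℤ) k = f b ^ c := by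
  rw [Fintype.prod_eq_single b fun k hk => by rw [Pi.single_eq_of_ne hk, zpow_zero],
    Pi.single_eq_same]

theorem prod_zpow_smul_single (f : I → G) (b : I) (n : ℕ) :
    ∏ k, f k ^ ((n : ℤ) • Pi.single b 1 : I → ℤ) k = f b ^ n := by
  rw [← Pi.single_smul', smul_eq_mul, mul_one, prod_zpow_single, zpow_natCast]

end WeightProduct

section SerreProduct

/-- `N₁(l)` expressed through `A = e_{i,λ}`, `B = e_{j,λ}`, `s = s_{ii}`, `t = s_{ij}`,
`u = s_{ji}`. -/
def serreProduct {G : Type*} [Monoid G] (A B s t u : G) (r l : ℕ) : G :=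
  (A * s ^ l * t) ^ (r - l) * (B * u ^ l) * A ^ l *
    s ^ (l * (l + 1) / 2 + (r - l) * (r - l + 1) / 2)

theorem serreProduct_mul_pow {G : Type*} [CommMonoid G] (A B s t u : G) {r l : ℕ} (hl : l ≤ r) :
    serreProduct A B s t u r l * t ^ l = serreProduct A B s t u r 0 * u ^ l := by
  obtain ⟨m, rfl⟩ := Nat.exists_eq_add_of_le hl
  simp only [serreProduct, Nat.add_sub_cancel_left, Nat.sub_zero, zero_add,
    Nat.zero_div, pow_zero, mul_one, triangle_add]
  simp only [mul_pow, pow_add, ← pow_mul]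
  ac_rfl

theorem serreProduct_eq {G : Type*} [CommGroup G] (A B s t u : G) {r l : ℕ} (hl : l ≤ r) :
    serreProduct A B s t u r l = serreProduct A B s t u r 0 * t ^ (-(l : ℤ)) * u ^ (l : ℤ) := by
  rw [zpow_neg, zpow_natCast, zpow_natCast, mul_right_comm, eq_mul_inv_iff_mul_eq,
    serreProduct_mul_pow A B s t u hl]

end SerreProduct

theorem serre_scalar_general {I : Type*} [Fintype I] [DecidableEq I] {R : Type*} [CommRing R]
    (s : I → I → Rˣ) (lam : I → ℤ) (i j : I) (r : ℕ)
    (N₁ : ℕ → Rˣ)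
    (hN₁ : ∀ l, N₁ l =
      (∏ k : I, s i k ^ ((lam + (l : ℤ) • Pi.single i 1 + Pi.single j 1 : I → ℤ) k)) ^ (r - l) *
      (∏ k : I, s j k ^ ((lam + (l : ℤ) • Pi.single i 1 : I → ℤ) k)) *
      (∏ k : I, s i k ^ (lam k)) ^ l *
      s i i ^ (l * (l + 1) / 2 + (r - l) * (r - l + 1) / 2)) :
    ∀ l ≤ r, N₁ l = N₁ 0 * s i j ^ (-(l : ℤ)) * s j i ^ (l : ℤ) := by
  have hN₁_eq : ∀ l, N₁ l = serreProduct (∏ k, s i k ^ lam k) (∏ k, s j k ^ lam k)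
      (s i i) (s i j) (s j i) r l := fun l => by
    rw [hN₁, serreProduct, prod_zpow_add, prod_zpow_add, prod_zpow_add, prod_zpow_single,
      prod_zpow_smul_single, prod_zpow_smul_single, zpow_one]
  intro l hl
  rw [hN₁_eq, hN₁_eq]
  exact serreProduct_eq _ _ _ _ _ hl

/-- With `e_{i,λ} = ∏_k s_{ik}^{λ(k)}` and
`N₁(l) = e_{i,λ+lα_i+α_j}^{r-l} · e_{j,λ+lα_i} · e_{i,λ}^l · s_{ii}^{l(l+1)/2+(r-l)(r-l+1)/2}`,
one has `N₁(l) = N₁(0) · s_{ij}^{-l} · s_{ji}^{l}` for all `0 ≤ l ≤ r`. -/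
theorem serre_scalar {I : Type*} [Fintype I] [DecidableEq I] {R : Type*} [CommRing R]
    (s : I → I → Rˣ) (lam : I → ℤ) (i j : I) (hij : i ≠ j) (r : ℕ)
    (N₁ : ℕ → Rˣ)
    (hN₁ : ∀ l, N₁ l =
      (∏ k : I, s i k ^ ((lam + (l : ℤ) • Pi.single i 1 + Pi.single j 1 : I → ℤ) k)) ^ (r - l) *
      (∏ k : I, s j k ^ ((lam + (l : ℤ) • Pi.single i 1 : I → ℤ) k)) *
      (∏ k : I, s i k ^ (lam k)) ^ l *
      s i i ^ (l * (l + 1) / 2 + (r - l) * (r - l + 1) / 2)) :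
    ∀ l ≤ r, N₁ l = N₁ 0 * s i j ^ (-(l : ℤ)) * s j i ^ (l : ℤ) :=
  serre_scalar_general s lam i j r N₁ hN₁
end

section
/- Let ψ be the map on generators defined by E'_{λ,λ-α_i} ↦ e_{i,λ} E_{λ,λ-α_i}, F'_{λ-α_i,λ} ↦ f_{i,λ} F_{λ-α_i,λ}, 1'_λ ↦ 1_λ, where e_{i,λ} = ∏_j s_{ij}^{λ(j)} and f_{i,λ} = ∏_j t_{ij}^{λ(j)}. Then ψ maps the commutator relation of Lusztig's modified algebra, E'_{λ,λ-α_i} F'_{λ-α_i,λ-α_i+α_j} - F'_{λ,λ+α_j} E'_{λ+α_j,λ+α_j-α_i} - δ_{ij}[λ_i]_{v_i} 1'_λ, to e_{i,λ} f_{j,λ-α_i+α_j} times the corresponding relation E_{λ,λ-α_i} F_{λ-α_i,λ-α_i+α_j} - s_{ij}t_{ji} F_{λ,λ+α_j} E_{λ+α_j,λ+α_j-α_i} - δ_{ij} c_{i,λ}[λ_i]_{q_i} 1_λ of the twisted modified algebra, assuming q_i = v_i; in particular ψ sends the first relation to a unit multiple of the second. -/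
/-!
Under `ψ` every monomial is only rescaled, by the product of the weights of its letters. The
`EF` term acquires exactly `e_{i,λ} f_{j,λ-α_i+α_j}`. The `FE` term acquires
`f_{j,λ+α_j} e_{i,λ+α_j}`, and since `λ+α_j = (λ-α_i+α_j)+α_i` this differs from the former
by `s_{ij} t_{ji}`. For `i = j` the factor `e_{i,λ} f_{i,λ} c_{i,λ}` in front of `1_λ` is `1`.
-/

noncomputable section

/-- Balanced quantum integer `[n]_q = (q^n - q^{-n})/(q - q^{-1})` in a field. -/
def qintF {K : Type*} [Field K] (q : K) (n : ℤ) : K := (q ^ n - q ^ (-n)) / (q - q⁻¹)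

/-- Formal generators of the modified algebras: `E lam i` stands for `E_{λ,λ-α_i}`,
`F lam i` stands for `F_{λ-α_i,λ}`, and `one lam` stands for `1_λ`. -/
inductive MGen (I : Type*) : Type _
  | E : (I → ℤ) → I → MGen I
  | F : (I → ℤ) → I → MGen I
  | one : (I → ℤ) → MGen I

open FreeAlgebra MGen

/-- The map `ψ` on generators: `E'_{λ,λ-α_i} ↦ e_{i,λ}E_{λ,λ-α_i}`,
`F'_{λ-α_i,λ} ↦ f_{i,λ}F_{λ-α_i,λ}`, `1'_λ ↦ 1_λ`, extended to the free algebra,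
where `e_{i,λ} = ∏_j s_{ij}^{λ(j)}`, `f_{i,λ} = ∏_j t_{ij}^{λ(j)}`. -/
def psi {I : Type*} [Fintype I] {K : Type*} [Field K] (s t : I → I → Kˣ) :
    FreeAlgebra K (MGen I) →ₐ[K] FreeAlgebra K (MGen I) :=
  FreeAlgebra.lift K fun g =>
    match g with
    | E lam i => ((∏ j : I, s i j ^ (lam j) : Kˣ) : K) • ι K (E lam i)
    | F lam i => ((∏ j : I, t i j ^ (lam j) : Kˣ) : K) • ι K (F lam i)
    | one lam => ι K (one lam)

section WeightProducts

variable {I G : Type*} [Fintype I] [CommGroup G]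

lemma prod_zpow_add_single [DecidableEq I] (u : I → G) (lam : I → ℤ) (j : I) (n : ℤ) :
    ∏ k, u k ^ (lam + Pi.single j n : I → ℤ) k = (∏ k, u k ^ lam k) * u j ^ n := by
  simp only [Pi.add_apply, zpow_add, Finset.prod_mul_distrib]
  congr 1
  rw [Fintype.prod_eq_single j fun k hk => by rw [Pi.single_eq_of_ne hk, zpow_zero],
    Pi.single_eq_same]

lemma prod_zpow_mul_prod_zpow_mul_prod_mul_zpow_neg (u w : I → G) (lam : I → ℤ) :
    (∏ k, u k ^ lam k) * (∏ k, w k ^ lam k) * ∏ k, (u k * w k) ^ (-lam k) = 1 := by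
  simp only [← Finset.prod_mul_distrib, zpow_neg, mul_zpow, mul_inv_cancel, Finset.prod_const_one]

lemma prod_zpow_add_single_mul_prod_zpow_add_single [DecidableEq I] (u w : I → G)
    (lam : I → ℤ) (i j : I) :
    (∏ k, u k ^ (lam + Pi.single j 1 : I → ℤ) k) * ∏ k, w k ^ (lam + Pi.single j 1 : I → ℤ) k =
      (∏ k, u k ^ lam k) * (∏ k, w k ^ (lam - Pi.single i 1 + Pi.single j 1 : I → ℤ) k) *
        (u j * w i) := by
  have hshift : lam + Pi.single j 1 = lam - Pi.single i 1 + Pi.single j 1 + Pi.single i 1 := by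
    abel
  rw [prod_zpow_add_single, hshift, prod_zpow_add_single (lam := _ + _)]
  simp only [zpow_one]
  ac_rfl

end WeightProducts

/-- `ψ` maps the commutator relation
`E'_{λ,λ-α_i}F'_{λ-α_i,λ-α_i+α_j} - F'_{λ,λ+α_j}E'_{λ+α_j,λ+α_j-α_i} - δ_{ij}[λ_i]_{v_i}1'_λ`
of Lusztig's modified algebra to the unit multiple `e_{i,λ}·f_{j,λ-α_i+α_j}` of the
corresponding relation
`E_{λ,λ-α_i}F_{λ-α_i,λ-α_i+α_j} - s_{ij}t_{ji}F_{λ,λ+α_j}E_{λ+α_j,λ+α_j-α_i} - δ_{ij}c_{i,λ}[λ_i]_{q_i}1_λ`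
of the twisted modified algebra (with `q_i = v_i = v^{d_i}`). -/
theorem psi_commutator_relation {I : Type*} [Fintype I] [DecidableEq I]
    {K : Type*} [Field K] (v : K) (d : I → ℤ) (s t : I → I → Kˣ)
    (lam : I → ℤ) (i j : I) :
    psi s t
        (ι K (E lam i) * ι K (F (lam - Pi.single i 1 + Pi.single j 1 : I → ℤ) j)
          - ι K (F (lam + Pi.single j 1 : I → ℤ) j)
              * ι K (E (lam + Pi.single j 1 : I → ℤ) i)
          - (if i = j then (1 : K) else 0) • qintF (v ^ d i) (lam i) • ι K (one lam)) =
      (((∏ k : I, s i k ^ (lam k)) *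
          (∏ k : I, t j k ^ ((lam - Pi.single i 1 + Pi.single j 1 : I → ℤ) k)) : Kˣ) : K) •
        (ι K (E lam i) * ι K (F (lam - Pi.single i 1 + Pi.single j 1 : I → ℤ) j)
          - ((s i j * t j i : Kˣ) : K) •
              (ι K (F (lam + Pi.single j 1 : I → ℤ) j)
                * ι K (E (lam + Pi.single j 1 : I → ℤ) i))
          - (if i = j then (1 : K) else 0) •
              ((((∏ k : I, (s i k * t i k) ^ (-(lam k)) : Kˣ) : K)
                * qintF (v ^ d i) (lam i)) • ι K (one lam))) := by
  have hFE := congrArg Units.val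
    (prod_zpow_add_single_mul_prod_zpow_add_single (s i) (t j) lam i j)
  have hc := congrArg Units.val (prod_zpow_mul_prod_zpow_mul_prod_mul_zpow_neg (s i) (t i) lam)
  push_cast at hFE hc
  simp only [psi, map_sub, map_mul, map_smul, lift_ι_apply, smul_smul, mul_smul_comm,
    smul_mul_assoc]
  match_scalars
  · ring
  · linear_combination -hFE
  · split_ifs with hij
    · subst hij
      rw [sub_add_cancel]
      linear_combination qintF (v ^ d i) (lam i) * hc
    · ring

end
end
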